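/- The quantity t_SE(α_1, …, α_n) is non-decreasing in each argument α_i ∈ (0,1]. -/

import Mathlib

open MeasureTheory ProbabilityTheory
open scoped ENNReal ProbabilityTheory

noncomputable section

/-- `Q(μ)`: the maximal atom of a measure on `ℤ`. -/
def concQ (μ : MeasureTheory.Measure ℤ) : ℝ := ⨆ x : ℤ, (μ {x}).toReal

/-- `Q(X)`: the maximal atom of an integer-valued random variable. -/
def rvQ {Ω : Type*} [MeasurableSpace Ω] (P : MeasureTheory.Measure Ω) (X : Ω → ℤ) : ℝ :=
  ⨆ x : ℤ, (P (X ⁻¹' {x})).toReal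

/-- `Q_j(μ)`: the sum of the `j` largest atoms of a measure on `ℤ`,
expressed as the supremum of the masses of sets of `j` integers. -/
def concQk (μ : MeasureTheory.Measure ℤ) (j : ℕ) : ℝ :=
  sSup {t : ℝ | ∃ A : Finset ℤ, A.card = j ∧ t = (μ (A : Set ℤ)).toReal}

/-- `μ₁ ≼_ε μ₂`: the concentration function of `μ₁` is `ε`-dominated by that of `μ₂`. -/
def EpsDom (ε : ℝ) (μ₁ μ₂ : MeasureTheory.Measure ℤ) : Prop :=
  ∀ j : ℕ, 0 < j → concQk μ₁ j ≤ (1 + ε) * concQk μ₂ j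

/-- The measure `ν_α` on `ℤ`. -/
def nu (α : ℝ) : MeasureTheory.Measure ℤ :=
  (∑ i ∈ Finset.range ⌊α⁻¹⌋₊, ENNReal.ofReal α • MeasureTheory.Measure.dirac (i : ℤ)) +
    ENNReal.ofReal (1 - α * (⌊α⁻¹⌋₊ : ℝ)) • MeasureTheory.Measure.dirac ((⌊α⁻¹⌋₊ : ℕ) : ℤ)

/-- The law of the sum of independent random variables with laws `μ i`,
i.e. the convolution of the measures `μ i`. -/
def lawSum {n : ℕ} (μ : Fin n → MeasureTheory.Measure ℤ) : MeasureTheory.Measure ℤ :=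
  MeasureTheory.Measure.map (fun x : Fin n → ℤ => ∑ i, x i) (MeasureTheory.Measure.pi μ)

/-- The variance of a measure on `ℤ`. -/
def intVar (μ : MeasureTheory.Measure ℤ) : ℝ := variance (fun n : ℤ => (n : ℝ)) μ

/-- The variance of `ν_α`. -/
def varNu (α : ℝ) : ℝ := intVar (nu α)

/-- A measure on `ℤ` is log-concave. -/
def IsLogConcave (μ : MeasureTheory.Measure ℤ) : Prop :=
  ∀ i : ℤ, μ {i - 1} * μ {i + 1} ≤ μ {i} ^ 2

/-- A measure on `ℤ` is symmetric. -/
def IsSymmetricZ (μ : MeasureTheory.Measure ℤ) : Prop := ∀ i : ℤ, μ {-i} = μ {i}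

/-- A measure on `ℤ` is unimodal. -/
def IsUnimodal (μ : MeasureTheory.Measure ℤ) : Prop :=
  ∃ m : ℤ, (∀ i, m ≤ i → μ {i + 1} ≤ μ {i}) ∧ (∀ i, i ≤ m → μ {i - 1} ≤ μ {i})

/-- A measure on `ℤ` is standard extremal for `α`: it is the law of `X + i`
where `X ~ ν_α` or `-X ~ ν_α`. -/
def StandardExtremal (α : ℝ) (μ : MeasureTheory.Measure ℤ) : Prop :=
  ∃ i : ℤ, μ = MeasureTheory.Measure.map (· + i) (nu α) ∨
    μ = MeasureTheory.Measure.map (fun x => -x + i) (nu α)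

/-- A measure on `ℤ` is extremal for `α`. -/
def IsExtremal (α : ℝ) (μ : MeasureTheory.Measure ℤ) : Prop :=
  ∃ (S : Finset ℤ) (b : ℤ), S.card = ⌊α⁻¹⌋₊ ∧ b ∉ S ∧
    (∀ i ∈ S, μ {i} = ENNReal.ofReal α) ∧
    μ {b} = ENNReal.ofReal (1 - (⌊α⁻¹⌋₊ : ℝ) * α)

/-- A sequence of measures is a balanced standard extremal sequence for `α`. -/
def BalancedSE {n : ℕ} (α : Fin n → ℝ) (μ : Fin n → MeasureTheory.Measure ℤ) : Prop :=
  (∀ i, StandardExtremal (α i) (μ i)) ∧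
    ∃ σ : Equiv.Perm (Fin n), ∀ i,
      μ (σ i) = MeasureTheory.Measure.map (fun x : ℤ => -x) (μ i)

/-- A tuple is balanced if a balanced standard extremal sequence exists for it. -/
def BalancedTuple {n : ℕ} (α : Fin n → ℝ) : Prop := ∃ μ, BalancedSE α μ

/-- A tuple is strongly balanced if each value is attained an even number of times. -/
def StronglyBalanced {n : ℕ} (α : Fin n → ℝ) : Prop :=
  ∀ a : ℝ, Even (Finset.univ.filter fun i => α i = a).card

/-- `t_SE^bal(α)`: the probability that the sum of a balanced standard extremal
sequence for `α` equals `0` (this value does not depend on the chosen sequence). -/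
def tSEbal {n : ℕ} (α : Fin n → ℝ) : ℝ :=
  sSup {t : ℝ | ∃ μ : Fin n → MeasureTheory.Measure ℤ,
    BalancedSE α μ ∧ t = (lawSum μ {0}).toReal}

/-- `t(α)`: the supremum of `Q(μ₁ * ⋯ * μ_n)` over probability measures with
`Q(μ i) ≤ α i`. -/
def tOpt {n : ℕ} (α : Fin n → ℝ) : ℝ :=
  sSup {t : ℝ | ∃ μ : Fin n → MeasureTheory.Measure ℤ,
    (∀ i, MeasureTheory.IsProbabilityMeasure (μ i)) ∧
    (∀ i, concQ (μ i) ≤ α i) ∧ t = concQ (lawSum μ)}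

/-- `t_SE(α)`: the maximal concentration of the convolution of a standard extremal
sequence for `α`. -/
def tSE {n : ℕ} (α : Fin n → ℝ) : ℝ :=
  sSup {t : ℝ | ∃ μ : Fin n → MeasureTheory.Measure ℤ,
    (∀ i, StandardExtremal (α i) (μ i)) ∧ t = concQ (lawSum μ)}

end

/-!
The factors are replaced one at a time. The convolution `ρ` of the other factors is log-concave
with interval support, hence unimodal, and the atom of `ρ ∗ μ` at `x` is an average of `ρ`
against weights `μ {x - u} ≤ α ≤ β` of total mass at most one. If `ρ ≥ ρ e` on a set `W` of
`k = ⌊β⁻¹⌋₊` points and `ρ ≤ ρ e` off `W`, the bathtub principle bounds this average by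
`β ∑_W ρ + (1 - β k) ρ e`. Unimodality provides such `W` and `e` filling a window `[a, a + k]`
with `e` at one of its ends, and then the bound is the atom at a suitable point of `ρ ∗ μ'`,
where `μ'` is `ν_β` shifted, and reflected if `e = a + k`.
-/

open Finset

/-- The Binet–Cauchy identity. -/
theorem two_mul_sum_mul_sum_sub_eq_sum_sum {ι R : Type*} [CommRing R] (s : Finset ι)
    (a a' b b' : ι → R) :
    2 * ((∑ i ∈ s, a i * b i) * (∑ i ∈ s, a' i * b' i) -
        (∑ i ∈ s, a i * b' i) * (∑ i ∈ s, a' i * b i)) =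
      ∑ i ∈ s, ∑ j ∈ s, (a i * a' j - a j * a' i) * (b i * b' j - b' i * b j) := by
  set P : ι → ι → R := fun i j => a i * b i * (a' j * b' j)
  set Q : ι → ι → R := fun i j => a i * b' i * (a' j * b j)
  have expand : ∀ i j, (a i * a' j - a j * a' i) * (b i * b' j - b' i * b j) =
      P i j + P j i - Q i j - Q j i := fun i j => by simp only [P, Q]; ring
  simp only [expand, sum_sub_distrib, sum_add_distrib]
  rw [sum_comm (f := fun i j => P j i), sum_comm (f := fun i j => Q j i), sum_mul_sum,
    sum_mul_sum]
  ring

lemma sum_Icc_comp_sub_one (F : ℤ → ℝ) (a b : ℤ) :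
    ∑ v ∈ Icc a (b + 1), F (v - 1) = ∑ y ∈ Icc (a - 1) b, F y :=
  sum_nbij' (· - 1) (· + 1) (fun v hv => by simp only [mem_Icc] at hv ⊢; omega)
    (fun v hv => by simp only [mem_Icc] at hv ⊢; omega)
    (fun v _ => sub_add_cancel v 1) (fun v _ => add_sub_cancel_right v 1) (fun v _ => rfl)

lemma sum_mul_le_bathtub {ι : Type*} [DecidableEq ι] {S W : Finset ι} {w g : ι → ℝ} {β c : ℝ}
    (hc : 0 ≤ c) (hβ : 0 ≤ β) (hw0 : ∀ u, 0 ≤ w u) (hwβ : ∀ u, w u ≤ β)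
    (hw1 : ∑ u ∈ S, w u ≤ 1) (hin : ∀ u ∈ W, c ≤ g u) (hout : ∀ u ∉ W, g u ≤ c) :
    ∑ u ∈ S, w u * g u ≤ β * ∑ u ∈ W, g u + (1 - β * #W) * c := by
  have off_W : ∑ u ∈ S \ W, w u * (g u - c) ≤ 0 :=
    sum_nonpos fun u hu => mul_nonpos_of_nonneg_of_nonpos (hw0 u)
      (sub_nonpos.2 (hout u (mem_sdiff.1 hu).2))
  have on_W : ∑ u ∈ S ∩ W, w u * (g u - c) ≤ ∑ u ∈ W, β * (g u - c) :=
    (sum_le_sum fun u hu => mul_le_mul_of_nonneg_right (hwβ u)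
      (sub_nonneg.2 (hin u (mem_inter.1 hu).2))).trans
    (sum_le_sum_of_subset_of_nonneg inter_subset_right fun u hu _ =>
      mul_nonneg hβ (sub_nonneg.2 (hin u hu)))
  have split : ∑ u ∈ S, w u * g u = ∑ u ∈ S ∩ W, w u * (g u - c) +
      ∑ u ∈ S \ W, w u * (g u - c) + c * ∑ u ∈ S, w u := by
    rw [sum_inter_add_sum_sdiff, mul_sum, ← sum_add_distrib]
    exact sum_congr rfl fun u _ => by ring
  have hW : ∑ u ∈ W, β * (g u - c) = β * ∑ u ∈ W, g u - β * #W * c := by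
    rw [← mul_sum, sum_sub_distrib, sum_const, nsmul_eq_mul]; ring
  nlinarith

lemma exists_window_start {g : ℤ → ℝ} {m : ℤ} (hmono : MonotoneOn g (Set.Iic m))
    (hanti : AntitoneOn g (Set.Ici m)) (k : ℕ) :
    ∃ a, m - k ≤ a ∧ a ≤ m ∧ g (a + k + 1) ≤ g a ∧ g (a - 1) ≤ g (a + k) := by
  -- `a` is the leftmost point of `[m - k, m]` with `g (a + k + 1) ≤ g a`
  have hk : g (m - k + k + k + 1) ≤ g (m - k + k) := by
    simpa using hanti (a := m) (Set.mem_Ici.2 le_rfl) (by simp; omega) (by omega)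
  have hex : ∃ j : ℕ, g (m - k + j + k + 1) ≤ g (m - k + j) := ⟨k, hk⟩
  have hjk : Nat.find hex ≤ k := Nat.find_min' hex hk
  refine ⟨m - k + Nat.find hex, by omega, by omega, Nat.find_spec hex, ?_⟩
  rcases Nat.eq_zero_or_pos (Nat.find hex) with h0 | hpos
  · rw [h0, show m - k + ((0 : ℕ) : ℤ) + k = m by omega]
    exact hmono (by simp; omega) (by simp) (by omega)
  · obtain ⟨i, hi⟩ := Nat.exists_eq_add_one_of_ne_zero hpos.ne'
    have hnot := not_le.1 (Nat.find_min hex (show i < Nat.find hex by omega))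
    rw [hi, show m - k + ((i + 1 : ℕ) : ℤ) - 1 = m - k + i by push_cast; ring,
      show m - k + ((i + 1 : ℕ) : ℤ) + k = m - k + i + k + 1 by push_cast; ring]
    exact hnot.le

lemma exists_window {g : ℤ → ℝ} {m : ℤ} (hmono : MonotoneOn g (Set.Iic m))
    (hanti : AntitoneOn g (Set.Ici m)) (k : ℕ) :
    ∃ a e : ℤ, (e = a ∨ e = a + k) ∧ (∀ u, a ≤ u → u ≤ a + k → g e ≤ g u) ∧
      ∀ u, u < a ∨ a + k < u → g u ≤ g e := by
  obtain ⟨a, hma, ham, hright, hleft⟩ := exists_window_start hmono hanti k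
  obtain ⟨e, he, hge⟩ : ∃ e, (e = a ∨ e = a + k) ∧ g e = min (g a) (g (a + k)) := by
    rcases min_choice (g a) (g (a + k)) with h | h
    exacts [⟨a, Or.inl rfl, h.symm⟩, ⟨a + k, Or.inr rfl, h.symm⟩]
  refine ⟨a, e, he, fun u hau hua => ?_, fun u hu => ?_⟩
  · rw [hge]
    rcases le_total u m with hum | hmu
    · exact (min_le_left _ _).trans (hmono (by simp; omega) (by simpa using hum) hau)
    · exact (min_le_right _ _).trans (hanti (by simpa using hmu) (by simp; omega) hua)
  · rw [hge]
    rcases hu with hu | hu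
    · have hu' : g u ≤ g (a - 1) := hmono (by simp; omega) (by simp; omega) (by omega)
      exact le_min (hu'.trans (hmono (by simp; omega) (by simp; omega) (by omega)))
        (hu'.trans hleft)
    · have hu' : g u ≤ g (a + k + 1) := hanti (by simp; omega) (by simp; omega) (by omega)
      exact le_min (hu'.trans hright)
        (hu'.trans (hanti (by simp; omega) (by simp; omega) (by omega)))

/-- Log-concavity alone is not preserved by convolution; the support must also be an interval. -/
structure IntervalLogConcave (f : ℤ → ℝ) (a b : ℤ) : Prop where
  le : a ≤ b
  nonneg : ∀ x, 0 ≤ f x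
  support_eq : Function.support f = Set.Icc a b
  mul_le_sq : ∀ x, f (x - 1) * f (x + 1) ≤ f x ^ 2

namespace IntervalLogConcave

variable {f g : ℤ → ℝ} {a b c d : ℤ}

lemma pos (h : IntervalLogConcave f a b) {x : ℤ} (hax : a ≤ x) (hxb : x ≤ b) : 0 < f x := by
  have hx : x ∈ Function.support f := h.support_eq ▸ ⟨hax, hxb⟩
  exact (h.nonneg x).lt_of_ne' hx

lemma mem_Icc_of_ne_zero (h : IntervalLogConcave f a b) {x : ℤ} (hx : f x ≠ 0) :
    a ≤ x ∧ x ≤ b := by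
  have : x ∈ Set.Icc a b := h.support_eq ▸ hx
  exact this

lemma eq_zero (h : IntervalLogConcave f a b) {x : ℤ} (hx : x < a ∨ b < x) : f x = 0 := by
  by_contra hfx
  have := h.mem_Icc_of_ne_zero hfx
  omega

lemma mul_le_mul_shift (h : IntervalLogConcave f a b) {x y : ℤ} (hxy : x ≤ y + 1) :
    f (x - 1) * f (y + 1) ≤ f x * f y := by
  induction y, (show x - 1 ≤ y by omega) using Int.leInduction with
  | base => rw [sub_add_cancel, mul_comm]
  | succ y hy ih =>
    by_cases h0 : f (x - 1) = 0 ∨ f (y + 1 + 1) = 0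
    · rcases h0 with h0 | h0 <;> simp only [h0, zero_mul, mul_zero] <;>
        exact mul_nonneg (h.nonneg _) (h.nonneg _)
    push Not at h0
    have hxa := (h.mem_Icc_of_ne_zero h0.1).1
    have hyb := (h.mem_Icc_of_ne_zero h0.2).2
    have hfy : 0 < f y := h.pos (by omega) (by omega)
    have hlc := h.mul_le_sq (y + 1)
    rw [add_sub_cancel_right] at hlc
    have := ih (by omega)
    refine le_of_mul_le_mul_right ?_ hfy
    nlinarith [h.nonneg (x - 1), h.nonneg (y + 1), h.nonneg x]

lemma exists_unimodal (h : IntervalLogConcave f a b) :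
    ∃ m, MonotoneOn f (Set.Iic m) ∧ AntitoneOn f (Set.Ici m) := by
  obtain ⟨m, hm, hmax⟩ := exists_max_image (Icc a b) f (nonempty_Icc.2 h.le)
  rw [mem_Icc] at hm
  have hfm : 0 < f m := h.pos hm.1 hm.2
  have le_max : ∀ x, f x ≤ f m := fun x => by
    by_cases hx : a ≤ x ∧ x ≤ b
    · exact hmax x (mem_Icc.2 hx)
    · rw [h.eq_zero (by omega)]; exact hfm.le
  refine ⟨m, monotoneOn_of_le_succ Set.ordConnected_Iic fun i _ _ hi => ?_,
    antitoneOn_of_succ_le Set.ordConnected_Ici fun i _ hi _ => ?_⟩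
  · rw [Order.succ_eq_add_one, Set.mem_Iic] at hi
    rw [Order.succ_eq_add_one]
    have hshift := h.mul_le_mul_shift (x := i + 1) (y := m - 1) (by omega)
    rw [add_sub_cancel_right, sub_add_cancel] at hshift
    refine le_of_mul_le_mul_right (hshift.trans ?_) hfm
    exact mul_le_mul_of_nonneg_left (le_max _) (h.nonneg _)
  · rw [Set.mem_Ici] at hi
    rw [Order.succ_eq_add_one]
    have hshift := h.mul_le_mul_shift (x := m + 1) (y := i) (by omega)
    rw [add_sub_cancel_right] at hshift
    refine le_of_mul_le_mul_left (hshift.trans ?_) hfm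
    exact mul_le_mul_of_nonneg_right (le_max _) (h.nonneg _)

lemma sum_Icc_eq_of_subset (hf : IntervalLogConcave f a b) (G : ℤ → ℝ) {s : Finset ℤ}
    (hs : Icc a b ⊆ s) : ∑ y ∈ Icc a b, f y * G y = ∑ y ∈ s, f y * G y :=
  sum_subset hs fun y _ hy => by
    rw [hf.eq_zero (by simp only [mem_Icc] at hy; omega), zero_mul]

lemma conv_mul_le_sq (hf : IntervalLogConcave f a b) (hg : IntervalLogConcave g c d) (n : ℤ) :
    (∑ y ∈ Icc a b, f y * g (n - 1 - y)) * (∑ y ∈ Icc a b, f y * g (n + 1 - y)) ≤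
      (∑ y ∈ Icc a b, f y * g (n - y)) ^ 2 := by
  set T := Icc a (b + 1)
  have hT : Icc a b ⊆ T := Icc_subset_Icc le_rfl (by omega)
  have shifted : ∀ x, ∑ y ∈ Icc a b, f y * g (x - y) = ∑ v ∈ T, f (v - 1) * g (x + 1 - v) := by
    intro x
    rw [hf.sum_Icc_eq_of_subset _ (Icc_subset_Icc (by omega : a - 1 ≤ a) le_rfl),
      ← sum_Icc_comp_sub_one (fun y => f y * g (x - y))]
    exact sum_congr rfl fun v _ => by ring_nf
  have hpred : ∑ v ∈ T, f (v - 1) * g (n - v) = ∑ y ∈ Icc a b, f y * g (n - 1 - y) := by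
    rw [shifted]; simp only [sub_add_cancel]
  have key := two_mul_sum_mul_sum_sub_eq_sum_sum T f (fun v => f (v - 1)) (fun v => g (n - v))
    (fun v => g (n + 1 - v))
  rw [← hf.sum_Icc_eq_of_subset (fun y => g (n - y)) hT,
    ← hf.sum_Icc_eq_of_subset (fun y => g (n + 1 - y)) hT, ← shifted, hpred] at key
  set A := fun v v' => f v * f (v' - 1) - f v' * f (v - 1)
  set B := fun v v' => g (n - v) * g (n + 1 - v') - g (n + 1 - v) * g (n - v')
  have factors_nonneg : ∀ v v', v ≤ v' → 0 ≤ A v v' ∧ 0 ≤ B v v' := by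
    intro v v' hvv'
    have hA := hf.mul_le_mul_shift (x := v) (y := v' - 1) (by omega)
    have hB := hg.mul_le_mul_shift (x := n + 1 - v') (y := n - v) (by omega)
    rw [sub_add_cancel] at hA
    rw [show n + 1 - v' - 1 = n - v' by ring, show n - v + 1 = n + 1 - v by ring] at hB
    constructor <;> simp only [A, B] <;> nlinarith
  -- `A` and `B` are antisymmetric, so each term of the double sum is a product of two factors
  -- of the same sign
  have : 0 ≤ ∑ v ∈ T, ∑ v' ∈ T, A v v' * B v v' := by
    refine sum_nonneg fun v _ => sum_nonneg fun v' _ => ?_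
    rcases le_total v v' with h | h
    · exact mul_nonneg (factors_nonneg v v' h).1 (factors_nonneg v v' h).2
    · obtain ⟨hA, hB⟩ := factors_nonneg v' v h
      simp only [A, B] at hA hB ⊢
      nlinarith
  nlinarith

lemma conv (hf : IntervalLogConcave f a b) (hg : IntervalLogConcave g c d) :
    IntervalLogConcave (fun x => ∑ y ∈ Icc a b, f y * g (x - y)) (a + c) (b + d) where
  le := add_le_add hf.le hg.le
  nonneg x := sum_nonneg fun y _ => mul_nonneg (hf.nonneg y) (hg.nonneg _)
  support_eq := by
    ext x
    simp only [Function.mem_support, Set.mem_Icc]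
    constructor
    · intro hx
      by_contra hout
      refine hx (sum_eq_zero fun y hy => ?_)
      simp only [mem_Icc] at hy
      rw [hg.eq_zero (by omega), mul_zero]
    · rintro ⟨hlo, hhi⟩
      obtain ⟨y, hay, hyb, hcy, hyd⟩ : ∃ y, a ≤ y ∧ y ≤ b ∧ c ≤ x - y ∧ x - y ≤ d := by
        have := hf.le; have := hg.le
        rcases le_total a (x - d) with h | h
        exacts [⟨x - d, by omega⟩, ⟨a, by omega⟩]
      refine (lt_of_lt_of_le ?_ (single_le_sum (fun y _ => mul_nonneg (hf.nonneg y)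
        (hg.nonneg _)) (mem_Icc.2 ⟨hay, hyb⟩))).ne'
      exact mul_pos (hf.pos hay hyb) (hg.pos hcy hyd)
  mul_le_sq n := hf.conv_mul_le_sq hg n

lemma comp_sub_const (h : IntervalLogConcave f a b) (i : ℤ) :
    IntervalLogConcave (fun x => f (x - i)) (a + i) (b + i) where
  le := by have := h.le; omega
  nonneg x := h.nonneg _
  support_eq := by
    ext x
    simp only [Function.mem_support, ← Function.mem_support (f := f), h.support_eq, Set.mem_Icc]
    omega
  mul_le_sq x := by
    rw [sub_right_comm, show x + 1 - i = x - i + 1 by ring]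
    exact h.mul_le_sq (x - i)

lemma comp_const_sub (h : IntervalLogConcave f a b) (i : ℤ) :
    IntervalLogConcave (fun x => f (i - x)) (i - b) (i - a) where
  le := by have := h.le; omega
  nonneg x := h.nonneg _
  support_eq := by
    ext x
    simp only [Function.mem_support, ← Function.mem_support (f := f), h.support_eq, Set.mem_Icc]
    omega
  mul_le_sq x := by
    rw [mul_comm, show i - (x + 1) = i - x - 1 by ring, show i - (x - 1) = i - x + 1 by ring]
    exact h.mul_le_sq (i - x)

end IntervalLogConcave

noncomputable def nuMass (α : ℝ) (x : ℤ) : ℝ :=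
  if 0 ≤ x ∧ x < ⌊α⁻¹⌋₊ then α else if x = ⌊α⁻¹⌋₊ then 1 - α * ⌊α⁻¹⌋₊ else 0

section nuMass

variable {α : ℝ}

lemma mul_floor_inv_le_one (hα : 0 < α) : α * ⌊α⁻¹⌋₊ ≤ 1 := by
  have := Nat.floor_le (inv_nonneg.2 hα.le)
  calc α * ⌊α⁻¹⌋₊ ≤ α * α⁻¹ := by gcongr
    _ = 1 := mul_inv_cancel₀ hα.ne'

lemma one_sub_mul_floor_inv_lt (hα : 0 < α) : 1 - α * ⌊α⁻¹⌋₊ < α := by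
  have := Nat.lt_floor_add_one α⁻¹
  have : 1 < α * (⌊α⁻¹⌋₊ + 1) := by
    calc 1 = α * α⁻¹ := (mul_inv_cancel₀ hα.ne').symm
      _ < α * (⌊α⁻¹⌋₊ + 1) := by gcongr
  linarith

lemma nuMass_of_lt {x : ℤ} (h0 : 0 ≤ x) (hx : x < ⌊α⁻¹⌋₊) : nuMass α x = α := if_pos ⟨h0, hx⟩

lemma nuMass_floor : nuMass α ⌊α⁻¹⌋₊ = 1 - α * ⌊α⁻¹⌋₊ := by simp [nuMass]

lemma nuMass_eq_zero {x : ℤ} (hx : x < 0 ∨ ⌊α⁻¹⌋₊ < x) : nuMass α x = 0 := by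
  rw [nuMass, if_neg (by omega), if_neg (by omega)]

lemma nuMass_nonneg (hα : 0 < α) (x : ℤ) : 0 ≤ nuMass α x := by
  unfold nuMass
  split_ifs
  exacts [hα.le, sub_nonneg.2 (mul_floor_inv_le_one hα), le_rfl]

lemma nuMass_le (hα : 0 < α) (x : ℤ) : nuMass α x ≤ α := by
  unfold nuMass
  split_ifs
  exacts [le_rfl, (one_sub_mul_floor_inv_lt hα).le, hα.le]

lemma exists_intervalLogConcave_nuMass (hα : 0 < α) : ∃ b, IntervalLogConcave (nuMass α) 0 b := by
  have lc : ∀ x, nuMass α (x - 1) * nuMass α (x + 1) ≤ nuMass α x ^ 2 := by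
    intro x
    by_cases hx : 0 ≤ x - 1 ∧ x + 1 ≤ ⌊α⁻¹⌋₊
    · rw [nuMass_of_lt (x := x) (by omega) (by omega), sq]
      exact mul_le_mul (nuMass_le hα _) (nuMass_le hα _) (nuMass_nonneg hα _) hα.le
    · rcases not_and_or.1 hx with h | h
      · rw [nuMass_eq_zero (Or.inl (by omega)), zero_mul]; positivity
      · rw [nuMass_eq_zero (x := x + 1) (Or.inr (by omega)), mul_zero]; positivity
  rcases (sub_nonneg.2 (mul_floor_inv_le_one hα)).eq_or_lt with hr | hr
  · have hk : ⌊α⁻¹⌋₊ ≠ 0 := fun hk => by simp [hk] at hr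
    refine ⟨⌊α⁻¹⌋₊ - 1, by omega, nuMass_nonneg hα, ?_, lc⟩
    ext x
    simp only [Function.mem_support, Set.mem_Icc, nuMass, ← hr]
    split_ifs <;> simp [hα.ne'] <;> omega
  · refine ⟨⌊α⁻¹⌋₊, by omega, nuMass_nonneg hα, ?_, lc⟩
    ext x
    simp only [Function.mem_support, Set.mem_Icc, nuMass]
    split_ifs <;> simp [hα.ne', hr.ne'] <;> omega

end nuMass

open MeasureTheory Measure

lemma conv_singleton (μ ν : Measure ℤ) [SFinite ν] (x : ℤ) :
    (μ ∗ ν) {x} = ∑' u, μ {u} * ν {x - u} := by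
  rw [Measure.conv, map_apply measurable_add (measurableSet_singleton x),
    Measure.prod_apply (measurable_add (measurableSet_singleton x)), lintegral_countable']
  refine tsum_congr fun u => ?_
  rw [mul_comm]
  congr 2
  ext y
  simp only [Set.mem_preimage, Set.mem_singleton_iff]
  omega

lemma toReal_conv_singleton (μ ν : Measure ℤ) [IsFiniteMeasure μ] [IsFiniteMeasure ν] (x : ℤ)
    {S : Finset ℤ} (hS : ∀ u ∉ S, (μ {u}).toReal * (ν {x - u}).toReal = 0) :
    ((μ ∗ ν) {x}).toReal = ∑ u ∈ S, (μ {u}).toReal * (ν {x - u}).toReal := by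
  have hS' : ∀ u ∉ S, μ {u} * ν {x - u} = 0 := fun u hu => by
    simpa [← ENNReal.toReal_mul, ENNReal.toReal_eq_zero_iff, ENNReal.mul_ne_top] using hS u hu
  rw [conv_singleton, tsum_eq_sum hS',
    ENNReal.toReal_sum fun _ _ => ENNReal.mul_ne_top (measure_ne_top _ _) (measure_ne_top _ _)]
  simp only [ENNReal.toReal_mul]

lemma sum_toReal_singleton_sub_le_one (μ : Measure ℤ) [IsProbabilityMeasure μ] (x : ℤ)
    (S : Finset ℤ) : ∑ u ∈ S, (μ {x - u}).toReal ≤ 1 := by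
  rw [← sum_image (f := fun y => (μ {y}).toReal) (g := fun u => x - u)
      (fun u _ v _ h => by simpa using h),
    ← ENNReal.toReal_sum fun _ _ => measure_ne_top _ _, sum_measure_singleton]
  exact ENNReal.toReal_le_of_le_ofReal zero_le_one (by simpa using prob_le_one)

lemma toReal_singleton_le_concQ (μ : Measure ℤ) [IsFiniteMeasure μ] (x : ℤ) :
    (μ {x}).toReal ≤ concQ μ :=
  le_ciSup (f := fun y => (μ {y}).toReal) ⟨(μ Set.univ).toReal, by
    rintro _ ⟨y, rfl⟩
    exact ENNReal.toReal_mono (measure_ne_top _ _) (measure_mono (Set.subset_univ _))⟩ x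

lemma concQ_le {μ : Measure ℤ} {c : ℝ} (h : ∀ x, (μ {x}).toReal ≤ c) : concQ μ ≤ c :=
  ciSup_le h

lemma lawSum_zero (μ : Fin 0 → Measure ℤ) : lawSum μ = dirac 0 := by
  rw [lawSum, pi_of_empty, map_dirac' (by fun_prop)]
  rfl

lemma lawSum_cons {n : ℕ} (μ₀ : Measure ℤ) (μ : Fin n → Measure ℤ) [SigmaFinite μ₀]
    [∀ i, SigmaFinite (μ i)] :
    lawSum (Fin.cons μ₀ μ : Fin (n + 1) → Measure ℤ) = μ₀ ∗ lawSum μ := by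
  have : ∀ i, SigmaFinite ((Fin.cons μ₀ μ : Fin (n + 1) → Measure ℤ) i) :=
    Fin.cases (by simpa) (by simpa)
  have hpi :=
    (measurePreserving_piFinSuccAbove (Fin.cons μ₀ μ : Fin (n + 1) → Measure ℤ) 0).symm.map_eq
  simp only [Fin.cons_zero, Fin.succAbove_zero, Fin.cons_succ] at hpi
  rw [lawSum, ← hpi, Measure.map_map (by fun_prop) (by fun_prop), lawSum, Measure.conv,
    ← Measure.map_id (μ := μ₀), map_prod_map _ _ measurable_id (by fun_prop),
    Measure.map_map (by fun_prop) (by fun_prop)]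
  congr 1
  · ext p
    simp [Fin.sum_univ_succ]
  · rw [Measure.map_id]

instance isProbabilityMeasure_lawSum {n : ℕ} (μ : Fin n → Measure ℤ)
    [∀ i, IsProbabilityMeasure (μ i)] : IsProbabilityMeasure (lawSum μ) :=
  isProbabilityMeasure_map (by fun_prop)

lemma nu_singleton {α : ℝ} (x : ℤ) : nu α {x} = ENNReal.ofReal (nuMass α x) := by
  simp only [nu, nuMass, Measure.add_apply, Measure.coe_finsetSum, Finset.sum_apply,
    Measure.smul_apply, Measure.dirac_apply' _ (measurableSet_singleton x), Set.indicator,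
    Set.mem_singleton_iff, Pi.one_apply, smul_eq_mul, mul_ite, mul_one, mul_zero]
  by_cases hx : 0 ≤ x ∧ x < ⌊α⁻¹⌋₊
  · rw [sum_eq_single_of_mem x.toNat (by simp only [mem_range]; omega)
      (fun i _ hi => if_neg (by omega)), if_pos (by omega), if_neg (by omega), if_pos hx, add_zero]
  · rw [sum_eq_zero (fun i hi => if_neg (by simp only [mem_range] at hi; omega)), zero_add,
      if_neg hx]
    by_cases hk : x = ⌊α⁻¹⌋₊
    · rw [if_pos hk.symm, if_pos hk]
    · rw [if_neg (Ne.symm hk), if_neg hk, ENNReal.ofReal_zero]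

lemma isProbabilityMeasure_nu {α : ℝ} (hα : 0 < α) : IsProbabilityMeasure (nu α) := by
  constructor
  simp only [nu, Measure.add_apply, Measure.coe_finsetSum, Finset.sum_apply, Measure.smul_apply,
    measure_univ, smul_eq_mul, mul_one, sum_const, card_range, nsmul_eq_mul]
  rw [← ENNReal.ofReal_natCast, ← ENNReal.ofReal_mul (by positivity),
    ← ENNReal.ofReal_add (by positivity) (sub_nonneg.2 (mul_floor_inv_le_one hα))]
  ring_nf
  exact ENNReal.ofReal_one

lemma map_add_const_singleton (μ : Measure ℤ) (i x : ℤ) : μ.map (· + i) {x} = μ {x - i} := by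
  rw [map_apply (by fun_prop) (measurableSet_singleton x)]
  congr 1
  ext y
  simp only [Set.mem_preimage, Set.mem_singleton_iff]
  omega

lemma map_neg_add_const_singleton (μ : Measure ℤ) (i x : ℤ) :
    μ.map (fun y => -y + i) {x} = μ {i - x} := by
  rw [map_apply (by fun_prop) (measurableSet_singleton x)]
  congr 1
  ext y
  simp only [Set.mem_preimage, Set.mem_singleton_iff]
  omega

def HasLogConcaveAtoms (μ : Measure ℤ) : Prop :=
  ∃ a b, IntervalLogConcave (fun x => (μ {x}).toReal) a b

lemma hasLogConcaveAtoms_dirac (c : ℤ) : HasLogConcaveAtoms (dirac c) := by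
  have hval : ∀ x, ((dirac c : Measure ℤ) {x}).toReal = if x = c then 1 else 0 := fun x => by
    rw [dirac_apply' _ (measurableSet_singleton x)]
    by_cases h : x = c <;> simp [h]
  refine ⟨c, c, ⟨le_rfl, fun x => by rw [hval]; positivity, ?_, fun x => ?_⟩⟩
  · ext x
    rw [Function.mem_support, hval, Set.Icc_self, Set.mem_singleton_iff]
    split_ifs <;> simpa
  · simp only [hval]
    split_ifs <;> first | omega | norm_num

lemma HasLogConcaveAtoms.conv {μ ν : Measure ℤ} [IsFiniteMeasure μ] [IsFiniteMeasure ν]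
    (hμ : HasLogConcaveAtoms μ) (hν : HasLogConcaveAtoms ν) : HasLogConcaveAtoms (μ ∗ ν) := by
  obtain ⟨a, b, hμ⟩ := hμ
  obtain ⟨c, d, hν⟩ := hν
  refine ⟨a + c, b + d, ?_⟩
  convert hμ.conv hν using 2 with x
  refine toReal_conv_singleton μ ν x fun u hu => ?_
  rw [hμ.eq_zero (by simp only [mem_Icc] at hu; omega), zero_mul]

lemma hasLogConcaveAtoms_lawSum {n : ℕ} (μ : Fin n → Measure ℤ)
    [∀ i, IsProbabilityMeasure (μ i)] (hμ : ∀ i, HasLogConcaveAtoms (μ i)) :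
    HasLogConcaveAtoms (lawSum μ) := by
  induction n with
  | zero => rw [lawSum_zero]; exact hasLogConcaveAtoms_dirac 0
  | succ n ih =>
    have : ∀ i, IsProbabilityMeasure (Fin.tail μ i) := fun i =>
      inferInstanceAs (IsProbabilityMeasure (μ i.succ))
    rw [← Fin.cons_self_tail μ, lawSum_cons]
    exact (hμ 0).conv (ih _ fun i => hμ i.succ)

namespace StandardExtremal

variable {α : ℝ} {μ : Measure ℤ}

lemma singleton_eq (h : StandardExtremal α μ) : ∃ i : ℤ,
    (∀ x, μ {x} = ENNReal.ofReal (nuMass α (x - i))) ∨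
      ∀ x, μ {x} = ENNReal.ofReal (nuMass α (i - x)) := by
  obtain ⟨i, rfl | rfl⟩ := h
  · exact ⟨i, Or.inl fun x => by rw [map_add_const_singleton, nu_singleton]⟩
  · exact ⟨i, Or.inr fun x => by rw [map_neg_add_const_singleton, nu_singleton]⟩

lemma isProbabilityMeasure (h : StandardExtremal α μ) (hα : 0 < α) :
    IsProbabilityMeasure μ := by
  have := isProbabilityMeasure_nu hα
  obtain ⟨i, rfl | rfl⟩ := h <;> exact isProbabilityMeasure_map (by fun_prop)

lemma toReal_singleton_le (h : StandardExtremal α μ) (hα : 0 < α) (x : ℤ) :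
    (μ {x}).toReal ≤ α := by
  obtain ⟨i, h | h⟩ := h.singleton_eq <;>
    rw [h, ENNReal.toReal_ofReal (nuMass_nonneg hα _)] <;> exact nuMass_le hα _

lemma hasLogConcaveAtoms (h : StandardExtremal α μ) (hα : 0 < α) : HasLogConcaveAtoms μ := by
  obtain ⟨b, hb⟩ := exists_intervalLogConcave_nuMass hα
  obtain ⟨i, h | h⟩ := h.singleton_eq
  · refine ⟨0 + i, b + i, ?_⟩
    simpa only [h, ENNReal.toReal_ofReal (nuMass_nonneg hα _)] using hb.comp_sub_const i
  · refine ⟨i - b, i - 0, ?_⟩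
    simpa only [h, ENNReal.toReal_ofReal (nuMass_nonneg hα _)] using hb.comp_const_sub i

end StandardExtremal

lemma exists_standardExtremal_window {β : ℝ} (hβ : 0 < β) {a e : ℤ}
    (he : e = a ∨ e = a + ⌊β⁻¹⌋₊) : ∃ μ z, StandardExtremal β μ ∧ ∀ u, (μ {z - u}).toReal =
      if u = e then 1 - β * ⌊β⁻¹⌋₊ else if u ∈ Icc a (a + ⌊β⁻¹⌋₊) then β else 0 := by
  rcases he with rfl | rfl
  · refine ⟨(nu β).map (· + 0), e + ⌊β⁻¹⌋₊, ⟨0, Or.inl rfl⟩, fun u => ?_⟩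
    rw [map_add_const_singleton, nu_singleton, ENNReal.toReal_ofReal (nuMass_nonneg hβ _)]
    split_ifs with h1 h2 <;> try rw [mem_Icc] at h2
    · rw [h1, show e + ⌊β⁻¹⌋₊ - e - 0 = ⌊β⁻¹⌋₊ by ring, nuMass_floor]
    · exact nuMass_of_lt (by omega) (by omega)
    · exact nuMass_eq_zero (by omega)
  · refine ⟨(nu β).map (fun y => -y + 0), a, ⟨0, Or.inr rfl⟩, fun u => ?_⟩
    rw [map_neg_add_const_singleton, nu_singleton, ENNReal.toReal_ofReal (nuMass_nonneg hβ _)]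
    split_ifs with h1 h2 <;> try rw [mem_Icc] at h2
    · rw [h1, show 0 - (a - (a + ⌊β⁻¹⌋₊)) = ⌊β⁻¹⌋₊ by ring, nuMass_floor]
    · exact nuMass_of_lt (by omega) (by omega)
    · exact nuMass_eq_zero (by omega)

lemma exists_standardExtremal_concQ_conv_le {ρ μ : Measure ℤ} [IsProbabilityMeasure ρ]
    (hρ : HasLogConcaveAtoms ρ) {α β : ℝ} (hμ : StandardExtremal α μ) (hα : 0 < α)
    (hαβ : α ≤ β) : ∃ μ', StandardExtremal β μ' ∧ concQ (ρ ∗ μ) ≤ concQ (ρ ∗ μ') := by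
  have hβ : 0 < β := hα.trans_le hαβ
  have := hμ.isProbabilityMeasure hα
  obtain ⟨c, d, hρ⟩ := hρ
  set g := fun x => (ρ {x}).toReal
  set k := ⌊β⁻¹⌋₊
  obtain ⟨m, hmono, hanti⟩ := hρ.exists_unimodal
  obtain ⟨a, e, he, hin, hout⟩ := exists_window hmono hanti k
  obtain ⟨μ', z, hμ', hμ'z⟩ := exists_standardExtremal_window hβ he
  have := hμ'.isProbabilityMeasure hβ
  set W := (Icc a (a + k)).erase e
  have heW : e ∈ Icc a (a + k) := mem_Icc.2 (by omega)
  have hW : #W = k := by rw [card_erase_of_mem heW, Int.card_Icc]; omega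
  have value : ((ρ ∗ μ') {z}).toReal = β * ∑ u ∈ W, g u + (1 - β * #W) * g e := by
    rw [toReal_conv_singleton ρ μ' z (S := Icc a (a + k)) fun u hu => by
        rw [hμ'z, if_neg (by rintro rfl; exact hu heW), if_neg hu, mul_zero],
      ← sum_erase_add _ _ heW, hμ'z, if_pos rfl, hW, mul_sum, mul_comm]
    congr 1
    refine sum_congr rfl fun u hu => ?_
    rw [hμ'z, if_neg (ne_of_mem_erase hu), if_pos (mem_of_mem_erase hu), mul_comm]
  have bound : ∀ x, ((ρ ∗ μ) {x}).toReal ≤ β * ∑ u ∈ W, g u + (1 - β * #W) * g e := by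
    intro x
    rw [toReal_conv_singleton ρ μ x (S := Icc c d) fun u hu => by
      rw [show (ρ {u}).toReal = 0 from hρ.eq_zero (by simp only [mem_Icc] at hu; omega),
        zero_mul]]
    simp_rw [mul_comm (ρ {_}).toReal]
    refine sum_mul_le_bathtub (hρ.nonneg e) hβ.le (fun _ => ENNReal.toReal_nonneg)
      (fun u => (hμ.toReal_singleton_le hα _).trans hαβ) (sum_toReal_singleton_sub_le_one μ x _)
      (fun u hu => hin u (mem_Icc.1 (mem_of_mem_erase hu)).1 (mem_Icc.1 (mem_of_mem_erase hu)).2)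
      fun u hu => ?_
    by_cases hue : u = e
    · rw [hue]
    · exact hout u (by simpa [W, hue, mem_Icc, or_iff_not_imp_left] using hu)
  exact ⟨μ', hμ', concQ_le fun x => (bound x).trans (value ▸ toReal_singleton_le_concQ _ z)⟩

/-- The prefactor `ν` carries the factors already replaced. -/
lemma exists_standardExtremal_concQ_conv_lawSum_le {n : ℕ} (ν : Measure ℤ)
    [IsProbabilityMeasure ν] (hν : HasLogConcaveAtoms ν) {α β : Fin n → ℝ}
    (hα : ∀ i, 0 < α i) (hαβ : ∀ i, α i ≤ β i) (μ : Fin n → Measure ℤ)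
    (hμ : ∀ i, StandardExtremal (α i) (μ i)) :
    ∃ μ' : Fin n → Measure ℤ, (∀ i, StandardExtremal (β i) (μ' i)) ∧
      concQ (ν ∗ lawSum μ) ≤ concQ (ν ∗ lawSum μ') := by
  induction n generalizing ν with
  | zero => exact ⟨μ, fun i => i.elim0, le_rfl⟩
  | succ n ih =>
    have hβ i : 0 < β i := (hα i).trans_le (hαβ i)
    have := fun i => (hμ i).isProbabilityMeasure (hα i)
    set t := Fin.tail μ
    have : ∀ i, IsProbabilityMeasure (t i) := fun i => this i.succ
    have hρ : HasLogConcaveAtoms (ν ∗ lawSum t) :=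
      hν.conv (hasLogConcaveAtoms_lawSum t fun i => (hμ i.succ).hasLogConcaveAtoms (hα i.succ))
    obtain ⟨μ₀', hμ₀', h₀⟩ := exists_standardExtremal_concQ_conv_le hρ (hμ 0) (hα 0) (hαβ 0)
    have := hμ₀'.isProbabilityMeasure (hβ 0)
    obtain ⟨t', ht', hrest⟩ := ih (ν ∗ μ₀') (hν.conv (hμ₀'.hasLogConcaveAtoms (hβ 0)))
      (fun i => hα i.succ) (fun i => hαβ i.succ) t (fun i => hμ i.succ)
    have := fun i => (ht' i).isProbabilityMeasure (hβ i.succ)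
    refine ⟨Fin.cons μ₀' t', Fin.forall_fin_succ.2 ⟨hμ₀', ht'⟩, ?_⟩
    rw [← Fin.cons_self_tail μ, lawSum_cons, lawSum_cons]
    calc concQ (ν ∗ μ 0 ∗ lawSum t)
        = concQ ((ν ∗ lawSum t) ∗ μ 0) := by rw [conv_comm (μ 0), conv_assoc]
      _ ≤ concQ ((ν ∗ lawSum t) ∗ μ₀') := h₀
      _ = concQ ((ν ∗ μ₀') ∗ lawSum t) := by rw [conv_assoc, conv_assoc, conv_comm (lawSum t)]
      _ ≤ concQ ((ν ∗ μ₀') ∗ lawSum t') := hrest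
      _ = concQ (ν ∗ μ₀' ∗ lawSum t') := by rw [conv_assoc]

lemma concQ_lawSum_le_tSE {n : ℕ} {β : Fin n → ℝ} (hβ : ∀ i, 0 < β i) {μ : Fin n → Measure ℤ}
    (hμ : ∀ i, StandardExtremal (β i) (μ i)) : concQ (lawSum μ) ≤ tSE β := by
  refine le_csSup ⟨1, ?_⟩ ⟨μ, hμ, rfl⟩
  rintro _ ⟨ν, hν, rfl⟩
  have := fun i => (hν i).isProbabilityMeasure (hβ i)
  exact concQ_le fun x => ENNReal.toReal_le_of_le_ofReal zero_le_one (by simpa using prob_le_one)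

theorem statement6_general (n : ℕ) (α β : Fin n → ℝ)
    (h0 : ∀ i, 0 < α i) (hle : ∀ i, α i ≤ β i) :
    tSE α ≤ tSE β := by
  have hβ i : 0 < β i := (h0 i).trans_le (hle i)
  refine csSup_le ⟨_, fun i => (nu (α i)).map (· + 0), fun i => ⟨0, Or.inl rfl⟩, rfl⟩ ?_
  rintro _ ⟨μ, hμ, rfl⟩
  have := fun i => (hμ i).isProbabilityMeasure (h0 i)
  obtain ⟨μ', hμ', hconc⟩ :=
    exists_standardExtremal_concQ_conv_lawSum_le (dirac 0) (hasLogConcaveAtoms_dirac 0) h0 hle μ hμ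
  have := fun i => (hμ' i).isProbabilityMeasure (hβ i)
  rw [dirac_zero_conv, dirac_zero_conv] at hconc
  exact hconc.trans (concQ_lawSum_le_tSE hβ hμ')

theorem statement6 (n : ℕ) (α β : Fin n → ℝ)
    (h0 : ∀ i, 0 < α i) (hle : ∀ i, α i ≤ β i) (h1 : ∀ i, β i ≤ 1) :
    tSE α ≤ tSE β :=
  statement6_general n α β h0 hle
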